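/- Let A be a symmetric matrix over GF(2) indexed by V × V with rows/columns indexed by V = V₁ ⊔ V₂ in block form [[A₁₁, A₁₂],[A₁₂ᵀ, A₂₂]] where A₁₁ and A₂₂ are zero (i.e., A is the adjacency matrix of a bipartite unlooped graph with classes V₁, V₂). Then the rank over GF(2) of the transversal T₁ consisting of {φ(v) : v ∈ V₁} ∪ {χ(v) : v ∈ V₂} in IAS(G) plus the rank of T₂ = {φ(v) : v ∈ V₂} ∪ {χ(v) : v ∈ V₁} equals |V|. -/

import Mathlib

/-- Adjacency matrix over GF(2) of the bipartite simple graph with classes `V₁, V₂` and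
biadjacency matrix `A₁`. -/
def bipAdj {V₁ V₂ : Type} (A₁ : Matrix V₁ V₂ (ZMod 2)) :
    Matrix (V₁ ⊕ V₂) (V₁ ⊕ V₂) (ZMod 2)
  | Sum.inl i, Sum.inr j => A₁ i j
  | Sum.inr j, Sum.inl i => A₁ i j
  | _, _ => 0

/-- Columns of `IAS(G) = (I | A | A+I)` over GF(2). -/
def iasCol {V : Type} [DecidableEq V] (A : Matrix V V (ZMod 2)) :
    V ⊕ V ⊕ V → V → ZMod 2
  | Sum.inl v => fun w => if w = v then 1 else 0
  | Sum.inr (Sum.inl v) => fun w => A w v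
  | Sum.inr (Sum.inr v) => fun w => A w v + (if w = v then 1 else 0)

/-!
Since `G` is bipartite, the column `χ(v)` of a vertex `v ∈ V₂` is supported on `V₁`, so it lies
in the span of `{φ(u) : u ∈ V₁}`, which is the coordinate subspace on `V₁`. Hence `T₁` spans
the coordinate subspace on `V₁` and, symmetrically, `T₂` the one on `V₂`; their dimensions
add up to `|V₁| + |V₂|`.
-/

open Submodule Set

section CoordinateSubspace

variable {R ι κ : Type*} [DecidableEq ι]

theorem mem_span_range_single_of_eq_zero [Semiring R] [Fintype ι] {g : κ → ι} {f : ι → R}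
    (hf : ∀ i ∉ range g, f i = 0) :
    f ∈ span R (range fun k => (Pi.single (g k) 1 : ι → R)) := by
  rw [← Finset.univ_sum_single f]
  refine sum_mem fun i _ => ?_
  by_cases hi : i ∈ range g
  · obtain ⟨k, rfl⟩ := hi
    rw [← mul_one (f (g k)), ← smul_eq_mul, Pi.single_smul']
    exact smul_mem _ _ (subset_span ⟨k, rfl⟩)
  · rw [hf i hi, Pi.single_zero]
    exact zero_mem _

theorem finrank_span_range_single [Field R] [Fintype ι] [Fintype κ] {g : κ → ι}
    (hg : g.Injective) :
    Module.finrank R (span R (range fun k => (Pi.single (g k) 1 : ι → R))) = Fintype.card κ := by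
  have := (Pi.basisFun R ι).linearIndependent.comp g hg
  exact finrank_span_eq_card (by simpa [Function.comp_def] using this)

end CoordinateSubspace

theorem iasCol_inl {V : Type} [DecidableEq V] (A : Matrix V V (ZMod 2)) (v : V) :
    iasCol A (Sum.inl v) = Pi.single v 1 := by
  funext w
  simp [iasCol, Pi.single_apply]

theorem span_iasCol_transversal {V κ κ' : Type} [Fintype V] [DecidableEq V]
    (A : Matrix V V (ZMod 2)) (g : κ → V) (h : κ' → V) (hA : ∀ w ∉ range g, ∀ k, A w (h k) = 0) :
    span (ZMod 2) (iasCol A ''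
        ({x | ∃ k, x = Sum.inl (g k)} ∪ {x | ∃ k, x = Sum.inr (Sum.inl (h k))})) =
      span (ZMod 2) (range fun k => Pi.single (g k) 1) := by
  apply le_antisymm
  · rw [span_le]
    rintro _ ⟨x, ⟨k, rfl⟩ | ⟨k, rfl⟩, rfl⟩
    · rw [iasCol_inl]
      exact subset_span ⟨k, rfl⟩
    · exact mem_span_range_single_of_eq_zero fun w hw => hA w hw k
  · refine span_mono ?_
    rintro _ ⟨k, rfl⟩
    exact ⟨Sum.inl (g k), Or.inl ⟨k, rfl⟩, iasCol_inl A (g k)⟩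

/-- Let `G` be the bipartite unlooped simple graph with classes `V₁, V₂` and adjacency
matrix `[[0, A₁],[A₁ᵀ, 0]]`.  Consider the two disjoint transversals of the vertex
triples `T₁ = {φ(v) : v ∈ V₁} ∪ {χ(v) : v ∈ V₂}` and `T₂ = {φ(v) : v ∈ V₂} ∪ {χ(v) : v ∈ V₁}`
in `IAS(G)`.  Then the GF(2)-rank of the columns of `T₁` plus the rank of the columns of
`T₂` equals `|V₁ ⊕ V₂|`. -/
theorem bipartite_transversal_rank_sum {V₁ V₂ : Type} [Fintype V₁] [Fintype V₂]
    [DecidableEq V₁] [DecidableEq V₂] (A₁ : Matrix V₁ V₂ (ZMod 2)) :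
    Module.finrank (ZMod 2) (Submodule.span (ZMod 2)
      (iasCol (bipAdj A₁) ''
        ({x | ∃ i : V₁, x = Sum.inl (Sum.inl i)} ∪
         {x | ∃ j : V₂, x = Sum.inr (Sum.inl (Sum.inr j))}))) +
    Module.finrank (ZMod 2) (Submodule.span (ZMod 2)
      (iasCol (bipAdj A₁) ''
        ({x | ∃ j : V₂, x = Sum.inl (Sum.inr j)} ∪
         {x | ∃ i : V₁, x = Sum.inr (Sum.inl (Sum.inl i))}))) =
    Fintype.card (V₁ ⊕ V₂) := by
  have hV₁ : ∀ w ∉ range Sum.inl, ∀ j, bipAdj A₁ w (Sum.inr j) = 0 := by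
    rintro (i | j') hw j
    · exact absurd ⟨i, rfl⟩ hw
    · rfl
  have hV₂ : ∀ w ∉ range Sum.inr, ∀ i, bipAdj A₁ w (Sum.inl i) = 0 := by
    rintro (i' | j) hw i
    · rfl
    · exact absurd ⟨j, rfl⟩ hw
  rw [span_iasCol_transversal _ _ _ hV₁, span_iasCol_transversal _ _ _ hV₂,
    finrank_span_range_single Sum.inl_injective, finrank_span_range_single Sum.inr_injective,
    Fintype.card_sum]
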